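/- Suppose |q_k(d) − q_k(d')| ≤ L·k^{-α} for one-coordinate changes with α > 1/2, D_k consists of k i.i.d. samples, and additionally the bias vanishes: E[q_k(D_k)] → p as k → ∞ for some real number p. Then q_k(D_k) → p almost surely. -/

import Mathlib

/-!
McDiarmid's inequality: if changing one of the `k` independent samples moves `f` by at most `c`,
then `f - E f` is sub-Gaussian with variance proxy `k c²`. Peeling off the first sample, the
fluctuation of `f` in that sample around its conditional mean is bounded by `c`, so Hoeffding's
lemma applies to it, and sub-Gaussian parameters add along the product measure. With
`c = L k^(-α)` the tail bound `2 exp (-ε² k^(2α-1) / (2 L²))` is summable because `2α - 1 > 0`,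
so by Borel–Cantelli `q k (D k) - E (q k (D k)) → 0` almost surely, and the vanishing bias gives
the limit `p`.
-/

open MeasureTheory ProbabilityTheory Filter Real
open scoped NNReal Topology

lemma MeasurableEquiv.piFinSuccAbove_zero_symm_apply {D : Type*} [MeasurableSpace D] {n : ℕ}
    (p : D × (Fin n → D)) :
    (MeasurableEquiv.piFinSuccAbove (fun _ : Fin (n + 1) => D) 0).symm p = Fin.cons p.1 p.2 := by
  simp [MeasurableEquiv.piFinSuccAbove, Fin.insertNthEquiv, Fin.insertNth_zero']

lemma measurable_fin_cons {D : Type*} [MeasurableSpace D] {n : ℕ} :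
    Measurable fun p : D × (Fin n → D) => (Fin.cons p.1 p.2 : Fin (n + 1) → D) := by
  have h := (MeasurableEquiv.piFinSuccAbove (fun _ : Fin (n + 1) => D) 0).symm.measurable
  rwa [funext MeasurableEquiv.piFinSuccAbove_zero_symm_apply] at h

lemma Measurable.comp_fin_cons_left {D : Type*} [MeasurableSpace D] {n : ℕ}
    {f : (Fin (n + 1) → D) → ℝ} (hfm : Measurable f) (x : Fin n → D) :
    Measurable fun y => f (Fin.cons y x) :=
  hfm.comp (measurable_fin_cons.comp measurable_prodMk_right)

lemma integral_integral_fin_cons {D : Type*} [MeasurableSpace D] {n : ℕ} (P : Measure D)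
    [SigmaFinite P] {f : (Fin (n + 1) → D) → ℝ} (hf : Integrable f (Measure.pi fun _ => P)) :
    ∫ x, ∫ y, f (Fin.cons y x) ∂P ∂(Measure.pi fun _ => P) = ∫ d, f d ∂Measure.pi fun _ => P := by
  have he := (measurePreserving_piFinSuccAbove (fun _ : Fin (n + 1) => P) 0).symm
  rw [← he.integral_comp', integral_prod_symm]
  · simp only [MeasurableEquiv.piFinSuccAbove_zero_symm_apply]
  · exact he.integrable_comp_of_integrable hf

lemma ProbabilityTheory.HasSubgaussianMGF.add_prod {α β : Type*} [MeasurableSpace α]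
    [MeasurableSpace β] {μ : Measure α} {ν : Measure β} [SFinite μ] [SFinite ν]
    {X : α → ℝ} {Y : β × α → ℝ} {cX cY : ℝ≥0} (hX : HasSubgaussianMGF X cX μ)
    (hY : ∀ x, HasSubgaussianMGF (fun y => Y (y, x)) cY ν)
    (hint : ∀ t, Integrable (fun p => exp (t * (Y p + X p.2))) (ν.prod μ)) :
    HasSubgaussianMGF (fun p => Y p + X p.2) (cY + cX) (ν.prod μ) where
  integrable_exp_mul := hint
  mgf_le t := calc
    mgf (fun p => Y p + X p.2) (ν.prod μ) t
      = ∫ x, mgf (fun y => Y (y, x)) ν t * exp (t * X x) ∂μ := by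
        rw [mgf, integral_prod_symm _ (hint t)]
        congr 1 with x
        rw [mgf, ← integral_mul_const]
        simp only [mul_add, exp_add]
    _ ≤ ∫ x, exp (cY * t ^ 2 / 2) * exp (t * X x) ∂μ :=
        integral_mono_of_nonneg (ae_of_all _ fun x => mul_nonneg mgf_nonneg (exp_pos _).le)
          ((hX.integrable_exp_mul t).const_mul _)
          (ae_of_all _ fun x => mul_le_mul_of_nonneg_right ((hY x).mgf_le t) (exp_pos _).le)
    _ ≤ exp (↑(cY + cX) * t ^ 2 / 2) := by
        rw [integral_const_mul, NNReal.coe_add, add_mul, add_div, exp_add]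
        gcongr
        exact hX.mgf_le t

def HasBoundedDifferences {ι D : Type*} [DecidableEq ι] (f : (ι → D) → ℝ) (c : ℝ) : Prop :=
  ∀ (i : ι) (d : ι → D) (x : D), |f (Function.update d i x) - f d| ≤ c

namespace HasBoundedDifferences

variable {D : Type*}

section

variable {c : ℝ}

lemma comp_cons {n : ℕ} {f : (Fin (n + 1) → D) → ℝ} (hf : HasBoundedDifferences f c) (y : D) :
    HasBoundedDifferences (fun x => f (Fin.cons y x)) c := fun i x z => by
  simpa only [Fin.cons_update] using hf i.succ (Fin.cons y x) z

lemma abs_sub_cons_le {n : ℕ} {f : (Fin (n + 1) → D) → ℝ} (hf : HasBoundedDifferences f c)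
    (x : Fin n → D) (y y' : D) : |f (Fin.cons y x) - f (Fin.cons y' x)| ≤ c := by
  simpa only [Fin.update_cons_zero] using hf 0 (Fin.cons y' x) y

lemma abs_sub_le : ∀ {n : ℕ} {f : (Fin n → D) → ℝ}, HasBoundedDifferences f c →
    ∀ d d', |f d - f d'| ≤ n * c
  | 0, f, _, d, d' => by simp [Subsingleton.elim d d']
  | n + 1, f, hf, d, d' => by
    rw [← Fin.cons_self_tail d, ← Fin.cons_self_tail d']
    calc _ ≤ |f (Fin.cons (d 0) (Fin.tail d)) - f (Fin.cons (d' 0) (Fin.tail d))|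
          + |f (Fin.cons (d' 0) (Fin.tail d)) - f (Fin.cons (d' 0) (Fin.tail d'))| :=
          _root_.abs_sub_le _ _ _
      _ ≤ c + n * c := add_le_add (hf.abs_sub_cons_le _ _ _) ((hf.comp_cons _).abs_sub_le _ _)
      _ = (n + 1 : ℕ) * c := by push_cast; ring

lemma mem_Icc_cons {n : ℕ} {f : (Fin (n + 1) → D) → ℝ} (hf : HasBoundedDifferences f c)
    (x : Fin n → D) (y₀ y : D) :
    f (Fin.cons y x) ∈ Set.Icc (f (Fin.cons y₀ x) - c) (f (Fin.cons y₀ x) + c) := by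
  have := abs_le.mp (hf.abs_sub_cons_le x y y₀)
  constructor <;> linarith [this.1, this.2]

lemma mem_Icc {n : ℕ} {f : (Fin n → D) → ℝ} (hf : HasBoundedDifferences f c) (d₀ d : Fin n → D) :
    f d ∈ Set.Icc (f d₀ - n * c) (f d₀ + n * c) := by
  have := abs_le.mp (hf.abs_sub_le d d₀)
  constructor <;> linarith [this.1, this.2]

end

variable [MeasurableSpace D]

section Cons

variable {n : ℕ} {f : (Fin (n + 1) → D) → ℝ}

lemma integrable_cons_left {P : Measure D} [IsFiniteMeasure P] [Nonempty D] {c : ℝ}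
    (hf : HasBoundedDifferences f c) (hfm : Measurable f) (x : Fin n → D) :
    Integrable (fun y => f (Fin.cons y x)) P :=
  .of_mem_Icc _ _ (hfm.comp_fin_cons_left x).aemeasurable
    (ae_of_all _ (hf.mem_Icc_cons x (Classical.arbitrary D)))

lemma integral_cons (P : Measure D) [IsProbabilityMeasure P] {c : ℝ}
    (hf : HasBoundedDifferences f c) (hfm : Measurable f) :
    HasBoundedDifferences (fun x => ∫ y, f (Fin.cons y x) ∂P) c := by
  have := nonempty_of_isProbabilityMeasure P
  intro i x z
  dsimp only
  rw [← integral_sub (hf.integrable_cons_left hfm _) (hf.integrable_cons_left hfm _)]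
  have h := norm_integral_le_of_norm_le_const (μ := P) (C := c)
    (f := fun y => f (Fin.cons y (Function.update x i z)) - f (Fin.cons y x))
    (ae_of_all _ fun y => by rw [Real.norm_eq_abs, Fin.cons_update]; exact hf _ _ _)
  simpa using h

lemma hasSubgaussianMGF_cons_sub_integral (P : Measure D) [IsProbabilityMeasure P] {c : ℝ≥0}
    (hf : HasBoundedDifferences f c) (hfm : Measurable f) (x : Fin n → D) :
    HasSubgaussianMGF (fun y => f (Fin.cons y x) - ∫ y', f (Fin.cons y' x) ∂P) (c ^ 2) P := by
  obtain ⟨y₀⟩ := nonempty_of_isProbabilityMeasure P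
  convert hasSubgaussianMGF_of_mem_Icc (hfm.comp_fin_cons_left x).aemeasurable
    (ae_of_all P (hf.mem_Icc_cons x y₀)) using 1
  ext
  simp only [NNReal.coe_pow, coe_nnnorm, Real.norm_eq_abs, NNReal.coe_div, NNReal.coe_ofNat]
  rw [add_sub_sub_cancel, abs_of_nonneg (by positivity)]
  ring

end Cons

theorem hasSubgaussianMGF_sub_integral (P : Measure D) [IsProbabilityMeasure P] {c : ℝ≥0}
    {n : ℕ} {f : (Fin n → D) → ℝ} (hf : HasBoundedDifferences f c) (hfm : Measurable f) :
    HasSubgaussianMGF (fun d => f d - ∫ d', f d' ∂Measure.pi fun _ => P) (n * c ^ 2)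
      (Measure.pi fun _ => P) := by
  induction n with
  | zero =>
    have hzero : (fun d : Fin 0 → D => f d - ∫ d', f d' ∂Measure.pi fun _ => P) = fun _ => 0 := by
      funext d
      simp [Subsingleton.elim _ d]
    simp [hzero]
  | succ n ih =>
    set μ := Measure.pi fun _ : Fin n => P
    set e := MeasurableEquiv.piFinSuccAbove (fun _ : Fin (n + 1) => D) 0
    have he : MeasurePreserving e (Measure.pi fun _ => P) (P.prod μ) :=
      measurePreserving_piFinSuccAbove (fun _ => P) 0
    have hfe : ∀ p, f (e.symm p) = f (Fin.cons p.1 p.2) := fun p => by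
      rw [MeasurableEquiv.piFinSuccAbove_zero_symm_apply]
    have hfcm : Measurable fun p : D × (Fin n → D) => f (Fin.cons p.1 p.2) :=
      hfm.comp measurable_fin_cons
    obtain ⟨d₀⟩ := nonempty_of_isProbabilityMeasure (Measure.pi fun _ : Fin (n + 1) => P)
    set g := fun x => ∫ y, f (Fin.cons y x) ∂P
    have hgm : Measurable g := hfcm.stronglyMeasurable.integral_prod_left'.measurable
    have hmean : ∫ x, g x ∂μ = ∫ d, f d ∂Measure.pi fun _ => P :=
      integral_integral_fin_cons P (.of_mem_Icc _ _ hfm.aemeasurable (ae_of_all _ (hf.mem_Icc d₀)))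
    have hint : ∀ t, Integrable (fun p : D × (Fin n → D) =>
        exp (t * ((f (Fin.cons p.1 p.2) - g p.2) + (g p.2 - ∫ x, g x ∂μ)))) (P.prod μ) := by
      intro t
      simp only [sub_add_sub_cancel]
      set m := ∫ x, g x ∂μ
      refine integrable_exp_mul_of_mem_Icc (a := f d₀ - (n + 1 : ℕ) * c - m)
        (b := f d₀ + (n + 1 : ℕ) * c - m) (hfcm.sub_const _).aemeasurable (ae_of_all _ fun p => ?_)
      have h := hf.mem_Icc d₀ (Fin.cons p.1 p.2)
      exact ⟨by linarith [h.1], by linarith [h.2]⟩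
    have hsum := (ih (hf.integral_cons P hfm) hgm).add_prod
      (Y := fun p => f (Fin.cons p.1 p.2) - g p.2) (hf.hasSubgaussianMGF_cons_sub_integral P hfm)
      hint
    rw [← he.map_eq] at hsum
    convert hsum.of_map e.measurable.aemeasurable using 1
    · funext d
      rw [← hmean]
      simp only [g, Function.comp, ← hfe, e.symm_apply_apply]
      ring
    · push_cast
      ring

theorem hasSubgaussianMGF_comp_sub_integral {Ω : Type*} [MeasurableSpace Ω] {μ : Measure Ω}
    (P : Measure D) [IsProbabilityMeasure P] {k : ℕ} {X : Fin k → Ω → D} (hX : iIndepFun X μ)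
    (hXm : ∀ i, Measurable (X i)) (hXP : ∀ i, μ.map (X i) = P) {c : ℝ≥0}
    {f : (Fin k → D) → ℝ} (hf : HasBoundedDifferences f c) (hfm : Measurable f) :
    HasSubgaussianMGF (fun ω => f (fun i => X i ω) - ∫ ω', f (fun i => X i ω') ∂μ) (k * c ^ 2)
      μ := by
  have hV : Measurable fun ω i => X i ω := measurable_pi_lambda _ hXm
  have hlaw : μ.map (fun ω i => X i ω) = Measure.pi fun _ => P := by
    rw [hX.map_fun_eq_pi_map fun i => (hXm i).aemeasurable]
    simp only [hXP]
  have h := hf.hasSubgaussianMGF_sub_integral P hfm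
  rw [← hlaw, integral_map hV.aemeasurable hfm.aestronglyMeasurable] at h
  exact h.of_map hV.aemeasurable

end HasBoundedDifferences

lemma ProbabilityTheory.HasSubgaussianMGF.measureReal_abs_ge_le {Ω : Type*} [MeasurableSpace Ω]
    {μ : Measure Ω} {X : Ω → ℝ} {c : ℝ≥0} (h : HasSubgaussianMGF X c μ) {ε : ℝ} (hε : 0 ≤ ε) :
    μ.real {ω | ε ≤ |X ω|} ≤ 2 * exp (-ε ^ 2 / (2 * c)) := by
  have : IsFiniteMeasure μ := by simpa [integrable_const_iff] using h.integrable_exp_mul 0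
  have hsplit : {ω | ε ≤ |X ω|} = {ω | ε ≤ X ω} ∪ {ω | ε ≤ (-X) ω} := by
    ext ω
    simp only [Set.mem_ofPred_eq, Set.mem_union, Pi.neg_apply, le_abs]
  calc μ.real {ω | ε ≤ |X ω|} ≤ μ.real {ω | ε ≤ X ω} + μ.real {ω | ε ≤ (-X) ω} :=
        hsplit ▸ measureReal_union_le _ _
    _ ≤ 2 * exp (-ε ^ 2 / (2 * c)) := by
        linarith [h.measure_ge_le hε, h.neg.measure_ge_le hε]

lemma summable_exp_neg_mul_rpow {a β : ℝ} (ha : 0 < a) (hβ : 0 < β) :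
    Summable fun k : ℕ => exp (-a * (k : ℝ) ^ β) := by
  refine summable_of_isBigO_nat (summable_nat_rpow.2 (by norm_num : (-2 : ℝ) < -1)) ?_
  refine ((isLittleO_exp_neg_mul_rpow_atTop ha (-2 / β)).comp_tendsto
    ((tendsto_rpow_atTop hβ).comp tendsto_natCast_atTop_atTop)).isBigO.congr_right fun k => ?_
  simp only [Function.comp, ← rpow_mul (Nat.cast_nonneg k)]
  field_simp

lemma ae_tendsto_zero_of_summable_measureReal_abs_ge {Ω : Type*} [MeasurableSpace Ω]
    {μ : Measure Ω} [IsFiniteMeasure μ] {Y : ℕ → Ω → ℝ}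
    (h : ∀ ε > 0, Summable fun k => μ.real {ω | ε ≤ |Y k ω|}) :
    ∀ᵐ ω ∂μ, Tendsto (fun k => Y k ω) atTop (𝓝 0) := by
  have hev : ∀ j : ℕ, ∀ᵐ ω ∂μ, ∀ᶠ k in atTop, |Y k ω| < 1 / (j + 1) := fun j => by
    have hsum : ∑' k, μ {ω | 1 / (j + 1 : ℝ) ≤ |Y k ω|} ≠ ⊤ := by
      simp_rw [← fun k => ofReal_measureReal (μ := μ) (s := {ω | 1 / (j + 1 : ℝ) ≤ |Y k ω|})]
      rw [← ENNReal.ofReal_tsum_of_nonneg (fun _ => measureReal_nonneg)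
        (h _ Nat.one_div_pos_of_nat)]
      exact ENNReal.ofReal_ne_top
    filter_upwards [ae_eventually_notMem hsum] with ω hω
    exact hω.mono fun k hk => not_le.mp hk
  filter_upwards [ae_all_iff.2 hev] with ω hω
  refine Metric.tendsto_nhds.2 fun ε hε => ?_
  obtain ⟨j, hj⟩ := exists_nat_one_div_lt hε
  exact (hω j).mono fun k hk => by rw [Real.dist_0_eq_abs]; exact hk.trans hj

lemma ae_tendsto_zero_of_hasSubgaussianMGF_rpow_neg {Ω : Type*} [MeasurableSpace Ω]
    {μ : Measure Ω} [IsFiniteMeasure μ] {Y : ℕ → Ω → ℝ} {K : ℝ≥0} {β : ℝ} (hK : 0 < K)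
    (hβ : 0 < β) (hY : ∀ᶠ k in atTop, HasSubgaussianMGF (Y k) (K * (k : ℝ≥0) ^ (-β)) μ) :
    ∀ᵐ ω ∂μ, Tendsto (fun k => Y k ω) atTop (𝓝 0) := by
  refine ae_tendsto_zero_of_summable_measureReal_abs_ge fun ε hε => ?_
  refine Summable.of_norm_bounded_eventually_nat
    ((summable_exp_neg_mul_rpow (a := ε ^ 2 / (2 * K)) (by positivity) hβ).mul_left 2) ?_
  filter_upwards [hY, eventually_ge_atTop 1] with k hYk hk
  rw [Real.norm_of_nonneg measureReal_nonneg]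
  refine (hYk.measureReal_abs_ge_le hε.le).trans_eq ?_
  have hk0 : (0 : ℝ) < k := by exact_mod_cast hk
  push_cast
  rw [rpow_neg hk0.le]
  field_simp

lemma NNReal.mul_mul_rpow_neg_sq {x : ℝ≥0} (hx : x ≠ 0) (K : ℝ≥0) (α : ℝ) :
    x * (K * x ^ (-α)) ^ 2 = K ^ 2 * x ^ (-(2 * α - 1)) := by
  rw [mul_pow, ← NNReal.rpow_natCast (x ^ (-α)), ← NNReal.rpow_mul, mul_left_comm]
  congr 1
  rw [mul_comm, ← NNReal.rpow_add_one hx]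
  congr 1
  push_cast
  ring

theorem pfn_consistency_general
    {Ω : Type*} [MeasureSpace Ω] [IsProbabilityMeasure (ℙ : Measure Ω)]
    {D : Type*} [MeasurableSpace D] (P : Measure D) [IsProbabilityMeasure P]
    (α L : ℝ) (hα : 1 / 2 < α)
    (X : ℕ → Ω → D)
    (hXindep : iIndepFun X ℙ)
    (hXmeas : ∀ i, Measurable (X i))
    (hXdist : ∀ i, Measure.map (X i) ℙ = P)
    (q : (k : ℕ) → (Fin k → D) → ℝ)
    (hqmeas : ∀ k, Measurable (q k))
    (hbd : ∀ (k : ℕ), 1 ≤ k → ∀ (i : Fin k) (d : Fin k → D) (x : D),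
      |q k (Function.update d i x) - q k d| ≤ L * (k : ℝ) ^ (-α))
    (p : ℝ)
    (hbias : Filter.Tendsto
      (fun k => ∫ ω, q k (fun i : Fin k => X i ω) ∂ℙ) Filter.atTop (nhds p)) :
    ∀ᵐ ω ∂ℙ, Filter.Tendsto (fun k => q k (fun i : Fin k => X i ω))
      Filter.atTop (nhds p) := by
  -- `K > 0` even when `L = 0`, where the Chernoff exponent `-ε² / (2 * 0)` would be the junk `0`.
  set K : ℝ≥0 := L.toNNReal + 1
  have hLK : L ≤ K := by simp only [K, NNReal.coe_add, NNReal.coe_one]; linarith [L.le_coe_toNNReal]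
  have hdev := ae_tendsto_zero_of_hasSubgaussianMGF_rpow_neg (μ := ℙ) (K := K ^ 2)
    (β := 2 * α - 1) (by positivity) (by linarith) ((eventually_ge_atTop 1).mono fun k hk => by
      have hqk : HasBoundedDifferences (q k) ↑(K * (k : ℝ≥0) ^ (-α)) := fun i d x =>
        (hbd k hk i d x).trans (by push_cast; gcongr)
      rw [← NNReal.mul_mul_rpow_neg_sq (by exact_mod_cast (by omega : k ≠ 0))]
      exact hqk.hasSubgaussianMGF_comp_sub_integral P (hXindep.precomp Fin.val_injective)
        (fun i => hXmeas i) (fun i => hXdist i) (hqmeas k))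
  filter_upwards [hdev] with ω hω
  simpa using hω.add hbias

/-- Consistency of the PFN predictor: bounded differences with bound `L * k^(-α)`,
`α > 1/2`, i.i.d. samples, and vanishing bias `E[q k D_k] → p` together imply
`q k D_k → p` almost surely. -/
theorem pfn_consistency
    {Ω : Type*} [MeasureSpace Ω] [IsProbabilityMeasure (ℙ : Measure Ω)]
    {D : Type*} [MeasurableSpace D] (P : Measure D) [IsProbabilityMeasure P]
    (α L : ℝ) (hα : 1 / 2 < α) (hL : 0 ≤ L)
    (X : ℕ → Ω → D)
    (hXindep : iIndepFun X ℙ)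
    (hXmeas : ∀ i, Measurable (X i))
    (hXdist : ∀ i, Measure.map (X i) ℙ = P)
    (q : (k : ℕ) → (Fin k → D) → ℝ)
    (hqmeas : ∀ k, Measurable (q k))
    (hqrange : ∀ k (d : Fin k → D), q k d ∈ Set.Icc (0 : ℝ) 1)
    (hbd : ∀ (k : ℕ), 1 ≤ k → ∀ (i : Fin k) (d : Fin k → D) (x : D),
      |q k (Function.update d i x) - q k d| ≤ L * (k : ℝ) ^ (-α))
    (p : ℝ)
    (hbias : Filter.Tendsto
      (fun k => ∫ ω, q k (fun i : Fin k => X i ω) ∂ℙ) Filter.atTop (nhds p)) :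
    ∀ᵐ ω ∂ℙ, Filter.Tendsto (fun k => q k (fun i : Fin k => X i ω))
      Filter.atTop (nhds p) :=
  pfn_consistency_general P α L hα X hXindep hXmeas hXdist q hqmeas hbd p hbias
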